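/- arXiv:2011.12185 — 3 statements merged into one kernel-verified Lean document; each statement's English description precedes it below -/
import Mathlib

section
/- Let Ω ⊂ ℂ be a nonempty open set and let (f_n) be a sequence of holomorphic functions on Ω that is locally bounded in L¹, i.e. for every compact set K ⊂ Ω one has sup_n ∫_K |f_n(z)| dA(z) < ∞. Then there exists a subsequence (f_{n_k}) and a holomorphic function f on Ω such that f_{n_k} → f locally uniformly on Ω, and moreover for every integer m ≥ 0 the derivatives f_{n_k}^{(m)} converge locally uniformly on Ω to f^{(m)}. -/
/-!
Integrating the mean value property `f z = circleAverage f z r` against `2πr dr` gives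
`π r² ‖f z‖ ≤ ∫_{B(z,r)} ‖f‖`, so local `L¹` bounds on a holomorphic family are local sup
bounds. Cauchy's estimate then bounds the derivatives locally, the family is equicontinuous,
and Arzelà–Ascoli yields a locally uniformly convergent subsequence. By Weierstrass' theorem
the limit is holomorphic and the derivatives of every order converge locally uniformly too.
-/

open Filter MeasureTheory Metric Set Real Topology

theorem Complex.add_polarCoord_symm (c : ℂ) (p : ℝ × ℝ) :
    c + Complex.polarCoord.symm p = circleMap c p.1 p.2 := by
  simp [circleMap, Complex.exp_mul_I]

theorem integral_ball_eq_intervalIntegral_circleAverage {E : Type*} [NormedAddCommGroup E]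
    [NormedSpace ℝ E] {g : ℂ → E} {c : ℂ} {R : ℝ} (hR : 0 ≤ R)
    (hg : ContinuousOn g (closedBall c R)) :
    ∫ w in ball c R, g w = ∫ r in 0..R, (2 * π * r) • circleAverage g c r := by
  set S : Set (ℝ × ℝ) := Ioo 0 R ×ˢ Ioo (-π) π
  set h : ℝ × ℝ → E := fun p => p.1 • g (circleMap c p.1 p.2)
  have h_int : IntegrableOn h S (volume.prod volume) := by
    have hcont : ContinuousOn h (Icc 0 R ×ˢ Icc (-π) π) := by
      refine continuousOn_fst.smul (hg.comp (by fun_prop) ?_)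
      rintro ⟨r, θ⟩ ⟨hr, -⟩
      exact closedBall_subset_closedBall hr.2 (circleMap_mem_closedBall c hr.1 θ)
    exact (hcont.integrableOn_compact (isCompact_Icc.prod isCompact_Icc)).mono_set
      (prod_mono Ioo_subset_Icc_self Ioo_subset_Icc_self)
  have h_inner (r : ℝ) :
      ∫ θ in Ioo (-π) π, h (r, θ) = (2 * π * r) • circleAverage g c r := by
    rw [circleAverage_eq_integral_add (-π), intervalIntegral.integral_comp_add_right
      (fun θ => g (circleMap c r θ)), smul_smul, integral_smul,
      ← integral_Ioc_eq_integral_Ioo, ← intervalIntegral.integral_of_le (by linarith [pi_pos])]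
    have : (2 : ℝ) * π + -π = π := by ring
    rw [zero_add, this]
    field_simp
  calc ∫ w in ball c R, g w
      = ∫ w, (ball (0 : ℂ) R).indicator (fun w => g (c + w)) w := by
        rw [← integral_indicator measurableSet_ball,
          ← integral_add_left_eq_self (μ := volume) ((ball c R).indicator g) c]
        congr 1 with w
        by_cases hw : ‖w‖ < R <;> simp [dist_eq_norm, hw]
    _ = ∫ p in Complex.polarCoord.target, S.indicator h p := by
        rw [← Complex.integral_comp_polarCoord_symm]
        refine setIntegral_congr_fun Complex.polarCoord.open_target.measurableSet ?_
        rintro ⟨r, θ⟩ ⟨hr, hθ⟩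
        show r • (ball 0 R).indicator _ (Complex.polarCoord.symm (r, θ)) = S.indicator h (r, θ)
        classical
        rw [indicator_apply, indicator_apply, Complex.add_polarCoord_symm]
        simp [S, h, abs_of_pos (mem_Ioi.mp hr), mem_Ioi.mp hr, mem_Ioo.mp hθ]
    _ = ∫ p in S, h p := by
        rw [setIntegral_indicator (measurableSet_Ioo.prod measurableSet_Ioo),
          inter_eq_self_of_subset_right]
        exact prod_mono Ioo_subset_Ioi_self subset_rfl
    _ = ∫ r in Ioo 0 R, ∫ θ in Ioo (-π) π, h (r, θ) := by
        rw [Measure.volume_eq_prod, setIntegral_prod _ h_int]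
    _ = ∫ r in 0..R, (2 * π * r) • circleAverage g c r := by
        simp_rw [h_inner]
        rw [intervalIntegral.integral_of_le hR, integral_Ioc_eq_integral_Ioo]

theorem norm_circleAverage_le_circleAverage_norm {E : Type*} [NormedAddCommGroup E]
    [NormedSpace ℝ E] (f : ℂ → E) (c : ℂ) (R : ℝ) :
    ‖circleAverage f c R‖ ≤ circleAverage (‖f ·‖) c R := by
  rw [circleAverage_def, circleAverage_def, norm_smul, Real.norm_of_nonneg (by positivity),
    smul_eq_mul]
  gcongr
  exact intervalIntegral.norm_integral_le_integral_norm (by positivity)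

theorem exists_subseq_tendstoLocallyUniformly_of_equicontinuous {X α : Type*}
    [TopologicalSpace X] [LocallyCompactSpace X] [SigmaCompactSpace X] [MetricSpace α]
    {F : ℕ → X → α} (hF : Equicontinuous F) (h_bdd : ∀ x, ∃ Q, IsCompact Q ∧ ∀ n, F n x ∈ Q) :
    ∃ φ : ℕ → ℕ, StrictMono φ ∧ ∃ g : X → α,
      TendstoLocallyUniformly (fun k => F (φ k)) g atTop := by
  set G : ℕ → C(X, α) := fun n => ⟨F n, hF.continuous n⟩
  have h_emb : IsClosedEmbedding
      (UniformOnFun.ofFun {K : Set X | IsCompact K} ∘ ((⇑) : C(X, α) → X → α)) :=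
    ⟨ContinuousMap.isUniformEmbedding_toUniformOnFunIsCompact.isEmbedding,
      (ContinuousMap.range_toUniformOnFunIsCompact (α := X) (β := α)) ▸
        UniformOnFun.isClosed_setOfPred_continuous CompactlyCoherentSpace.isCoherentWith⟩
  have h_eq : Equicontinuous fun i : range G => ⇑i.1 :=
    fun x U hU => (hF x U hU).mono fun y hy ⟨_, n, rfl⟩ => hy n
  have h_cpt : IsCompact (closure (range G)) :=
    ArzelaAscoli.isCompact_closure_of_isClosedEmbedding (fun _ hK => hK) h_emb
      (fun K _ => h_eq.equicontinuousOn K) fun _ _ x _ =>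
        (h_bdd x).imp fun _ ⟨hQ, h⟩ => ⟨hQ, by rintro _ ⟨n, rfl⟩; exact h n⟩
  obtain ⟨g, -, φ, hφ, h_lim⟩ :=
    h_cpt.isSeqCompact fun n => subset_closure (mem_range_self (f := G) n)
  exact ⟨φ, hφ, g, ContinuousMap.tendsto_iff_tendstoLocallyUniformly.mp h_lim⟩

section Holomorphic

variable {E : Type*} [NormedAddCommGroup E] [NormedSpace ℂ E]

theorem DifferentiableOn.norm_le_circleAverage_norm [CompleteSpace E] {f : ℂ → E} {c : ℂ} {R : ℝ}
    (hf : DifferentiableOn ℂ f (closedBall c |R|)) :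
    ‖f c‖ ≤ circleAverage (‖f ·‖) c R := by
  rw [← hf.diffContOnCl_ball le_rfl |>.circleAverage]
  exact norm_circleAverage_le_circleAverage_norm f c R

theorem DifferentiableOn.pi_mul_sq_mul_norm_le_integral_norm_ball [CompleteSpace E]
    {f : ℂ → E} {c : ℂ} {R : ℝ} (hR : 0 ≤ R) (hf : DifferentiableOn ℂ f (closedBall c R)) :
    π * R ^ 2 * ‖f c‖ ≤ ∫ w in ball c R, ‖f w‖ := by
  have h_avg_cont : ContinuousOn (circleAverage (‖f ·‖) c) (Icc 0 R) :=
    (hf.continuousOn.norm.mono fun z hz => mem_closedBall_iff_norm.mpr hz.2).circleAverage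
      fun r hr => hr.1
  rw [integral_ball_eq_intervalIntegral_circleAverage hR hf.continuousOn.norm]
  calc π * R ^ 2 * ‖f c‖ = ∫ r in 0..R, (2 * π * r) • ‖f c‖ := by
        rw [intervalIntegral.integral_smul_const, intervalIntegral.integral_const_mul,
          integral_id, smul_eq_mul]
        ring
    _ ≤ ∫ r in 0..R, (2 * π * r) • circleAverage (‖f ·‖) c r := by
        refine intervalIntegral.integral_mono_on hR
          (Continuous.intervalIntegrable (by fun_prop) _ _) ?_ fun r hr => ?_
        · exact ((continuousOn_const.mul continuousOn_id).smul h_avg_cont).intervalIntegrable_of_Icc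
            hR
        · refine smul_le_smul_of_nonneg_left ?_ (by have := hr.1; positivity)
          refine (hf.mono (closedBall_subset_closedBall ?_)).norm_le_circleAverage_norm
          rw [abs_of_nonneg hr.1]; exact hr.2

theorem DifferentiableOn.norm_le_of_integral_norm_cthickening_le [CompleteSpace E]
    {f : ℂ → E} {K : Set ℂ} {δ C : ℝ} (hK : IsCompact K) (hδ : 0 < δ)
    (hf : DifferentiableOn ℂ f (cthickening δ K))
    (hC : ∫ w in cthickening δ K, ‖f w‖ ≤ C) {z : ℂ} (hz : z ∈ K) :
    ‖f z‖ ≤ C / (π * δ ^ 2) := by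
  have h_ball : closedBall z δ ⊆ cthickening δ K := closedBall_subset_cthickening hz δ
  rw [le_div_iff₀ (by positivity), mul_comm]
  calc π * δ ^ 2 * ‖f z‖ ≤ ∫ w in ball z δ, ‖f w‖ :=
        (hf.mono h_ball).pi_mul_sq_mul_norm_le_integral_norm_ball hδ.le
    _ ≤ ∫ w in cthickening δ K, ‖f w‖ :=
        setIntegral_mono_set (hf.continuousOn.norm.integrableOn_compact hK.cthickening)
          (.of_forall fun _ => norm_nonneg _)
          (ball_subset_closedBall.trans h_ball).eventuallyLE
    _ ≤ C := hC

theorem exists_forall_norm_le_of_integral_norm_le {ι : Type*} [CompleteSpace E]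
    {F : ι → ℂ → E} {U : Set ℂ} (hU : IsOpen U) (hF : ∀ i, DifferentiableOn ℂ (F i) U)
    (hL1 : ∀ K ⊆ U, IsCompact K → ∃ C : ℝ, ∀ i, ∫ z in K, ‖F i z‖ ≤ C)
    {K : Set ℂ} (hKU : K ⊆ U) (hK : IsCompact K) :
    ∃ M, ∀ i, ∀ z ∈ K, ‖F i z‖ ≤ M := by
  obtain ⟨δ, hδ, h_thick⟩ := hK.exists_cthickening_subset_open hU hKU
  obtain ⟨C, hC⟩ := hL1 _ h_thick hK.cthickening
  exact ⟨C / (π * δ ^ 2), fun i z hz =>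
    ((hF i).mono h_thick).norm_le_of_integral_norm_cthickening_le hK hδ (hC i) hz⟩

theorem DifferentiableOn.norm_sub_le_of_norm_le {f : ℂ → E} {z w : ℂ} {r M : ℝ} (hr : 0 < r)
    (hf : DifferentiableOn ℂ f (closedBall z (2 * r)))
    (hM : ∀ y ∈ closedBall z (2 * r), ‖f y‖ ≤ M) (hw : w ∈ closedBall z r) :
    ‖f w - f z‖ ≤ M / r * ‖w - z‖ := by
  have h_ball : ∀ x ∈ closedBall z r, closedBall x r ⊆ closedBall z (2 * r) := fun x hx =>
    closedBall_subset_closedBall' (by linarith [mem_closedBall.mp hx])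
  refine (convex_closedBall z r).norm_image_sub_le_of_norm_deriv_le (fun x hx => ?_)
    (fun x hx => ?_) (mem_closedBall_self hr.le) hw
  · exact (hf.mono ball_subset_closedBall).differentiableAt
      (isOpen_ball.mem_nhds (closedBall_subset_ball (by linarith) hx))
  · exact Complex.norm_deriv_le_of_forall_mem_sphere_norm_le hr
      (hf.diffContOnCl_ball (h_ball x hx)) fun y hy =>
        hM y (h_ball x hx (sphere_subset_closedBall hy))

theorem equicontinuous_restrict_of_forall_norm_le {ι : Type*} {F : ι → ℂ → E} {U : Set ℂ}
    (hU : IsOpen U) (hF : ∀ i, DifferentiableOn ℂ (F i) U)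
    (hbdd : ∀ K ⊆ U, IsCompact K → ∃ M, ∀ i, ∀ z ∈ K, ‖F i z‖ ≤ M) :
    Equicontinuous fun i (w : U) => F i w := by
  rintro ⟨z, hz⟩
  obtain ⟨ε, hε, h_ball⟩ := nhds_basis_closedBall.mem_iff.mp (hU.mem_nhds hz)
  obtain ⟨r, hr, rfl⟩ : ∃ r, 0 < r ∧ 2 * r = ε := ⟨ε / 2, by positivity, by ring⟩
  obtain ⟨M, hM⟩ := hbdd _ h_ball (isCompact_closedBall z (2 * r))
  refine Metric.equicontinuousAt_of_continuity_modulus (fun w => M / r * dist w.1 z) ?_ _ ?_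
  · have : Continuous fun w : U => M / r * dist w.1 z := by fun_prop
    simpa using this.tendsto ⟨z, hz⟩
  · have : ∀ᶠ w : U in 𝓝 ⟨z, hz⟩, w.1 ∈ closedBall z r :=
      continuous_subtype_val.continuousAt.eventually_mem (x := ⟨z, hz⟩)
        (closedBall_mem_nhds z hr)
    filter_upwards [this] with w hw i
    rw [dist_comm, dist_eq_norm, dist_eq_norm]
    exact ((hF i).mono h_ball).norm_sub_le_of_norm_le hr (hM i) hw

theorem exists_subseq_tendstoLocallyUniformlyOn_of_forall_norm_le [ProperSpace E]
    {F : ℕ → ℂ → E} {U : Set ℂ} (hU : IsOpen U) (hF : ∀ n, DifferentiableOn ℂ (F n) U)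
    (hbdd : ∀ K ⊆ U, IsCompact K → ∃ M, ∀ n, ∀ z ∈ K, ‖F n z‖ ≤ M) :
    ∃ φ : ℕ → ℕ, StrictMono φ ∧ ∃ g : ℂ → E,
      TendstoLocallyUniformlyOn (fun k => F (φ k)) g atTop U := by
  have := hU.locallyCompactSpace
  have : SigmaCompactSpace U := sigmaCompactSpace_of_locallyCompact_secondCountable
  have h_pt : ∀ z : U, ∃ Q, IsCompact Q ∧ ∀ n, F n z ∈ Q := fun z => by
    obtain ⟨M, hM⟩ := hbdd {z.1} (singleton_subset_iff.mpr z.2) isCompact_singleton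
    exact ⟨closedBall 0 M, isCompact_closedBall 0 M,
      fun n => mem_closedBall_zero_iff.mpr (hM n z rfl)⟩
  obtain ⟨φ, hφ, g, hg⟩ := exists_subseq_tendstoLocallyUniformly_of_equicontinuous
    (equicontinuous_restrict_of_forall_norm_le hU hF hbdd) h_pt
  refine ⟨φ, hφ, Function.extend Subtype.val g 0, ?_⟩
  rw [tendstoLocallyUniformlyOn_iff_tendstoLocallyUniformly_comp_coe,
    Function.extend_comp Subtype.val_injective]
  exact hg

theorem TendstoLocallyUniformlyOn.iteratedDerivWithin {ι : Type*} [CompleteSpace E]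
    {l : Filter ι} {F : ι → ℂ → E} {f : ℂ → E} {U : Set ℂ}
    (hf : TendstoLocallyUniformlyOn F f l U)
    (hF : ∀ᶠ n in l, DifferentiableOn ℂ (F n) U) (hU : IsOpen U) (m : ℕ) :
    TendstoLocallyUniformlyOn (fun n => iteratedDerivWithin m (F n) U)
      (iteratedDerivWithin m f U) l U := by
  induction m generalizing F f with
  | zero => simpa using hf
  | succ m ih =>
    have h_deriv : ∀ h : ℂ → E, EqOn (_root_.iteratedDerivWithin m (_root_.deriv h) U)
        (_root_.iteratedDerivWithin (m + 1) h U) U := fun h => by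
      rw [iteratedDerivWithin_succ']
      exact iteratedDerivWithin_congr fun z hz => (derivWithin_of_isOpen hU hz).symm
    have hF' : ∀ᶠ n in l, DifferentiableOn ℂ (_root_.deriv (F n)) U :=
      hF.mono fun n h => (h.analyticOnNhd hU).deriv.differentiableOn
    exact ((ih (hf.deriv hF hU) hF').congr fun n => h_deriv (F n)).congr_right (h_deriv f)

end Holomorphic

theorem montel_L1_locally_bounded_general
    (Ω : Set ℂ) (hΩ_open : IsOpen Ω)
    (f : ℕ → ℂ → ℂ) (h_holo : ∀ n, DifferentiableOn ℂ (f n) Ω)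
    (h_L1 : ∀ K ⊆ Ω, IsCompact K → ∃ C : ℝ, ∀ n, ∫ z in K, ‖f n z‖ ≤ C) :
    ∃ (φ : ℕ → ℕ), StrictMono φ ∧
      ∃ g : ℂ → ℂ, DifferentiableOn ℂ g Ω ∧
        TendstoLocallyUniformlyOn (fun k => f (φ k)) g atTop Ω ∧
        ∀ m : ℕ,
          TendstoLocallyUniformlyOn
            (fun k => iteratedDerivWithin m (f (φ k)) Ω)
            (iteratedDerivWithin m g Ω) atTop Ω := by
  obtain ⟨φ, hφ, g, hg⟩ := exists_subseq_tendstoLocallyUniformlyOn_of_forall_norm_le hΩ_open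
    h_holo fun K hKΩ hK => exists_forall_norm_le_of_integral_norm_le hΩ_open h_holo h_L1 hKΩ hK
  have h_holo_φ : ∀ᶠ k in atTop, DifferentiableOn ℂ (f (φ k)) Ω :=
    .of_forall fun k => h_holo (φ k)
  exact ⟨φ, hφ, g, hg.differentiableOn h_holo_φ hΩ_open, hg,
    hg.iteratedDerivWithin h_holo_φ hΩ_open⟩

/-- **Montel's theorem under local `L¹` bounds** (Bär's Montel theorem for the
Cauchy–Riemann operator): a sequence of holomorphic functions on an open set `Ω ⊆ ℂ`
which is locally bounded in `L¹` has a subsequence converging locally uniformly on `Ω`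
to a holomorphic function, together with all of its derivatives. -/
theorem montel_L1_locally_bounded
    (Ω : Set ℂ) (hΩ_open : IsOpen Ω) (hΩ_ne : Ω.Nonempty)
    (f : ℕ → ℂ → ℂ) (h_holo : ∀ n, DifferentiableOn ℂ (f n) Ω)
    (h_L1 : ∀ K ⊆ Ω, IsCompact K → ∃ C : ℝ, ∀ n, ∫ z in K, ‖f n z‖ ≤ C) :
    ∃ (φ : ℕ → ℕ), StrictMono φ ∧
      ∃ g : ℂ → ℂ, DifferentiableOn ℂ g Ω ∧
        TendstoLocallyUniformlyOn (fun k => f (φ k)) g atTop Ω ∧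
        ∀ m : ℕ,
          TendstoLocallyUniformlyOn
            (fun k => iteratedDerivWithin m (f (φ k)) Ω)
            (iteratedDerivWithin m g Ω) atTop Ω :=
  montel_L1_locally_bounded_general Ω hΩ_open f h_holo h_L1
end

section
/- Let Ω ⊂ ℝⁿ be a nonempty open set, let K ⊂ Ω be compact, and let U be an open set with compact closure satisfying K ⊂ U and closure(U) ⊂ Ω. Then there exists a constant C > 0 (depending only on n, K, U) such that every function u : Ω → ℝ that is smooth on Ω and satisfies Δu = 0 on Ω (where Δ is the Laplacian) obeys sup_{x ∈ K} |u(x)| ≤ C · ∫_U |u(y)| dy. -/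
open MeasureTheory

/-- The Laplacian `Δu = Σᵢ ∂²u/∂xᵢ²` of a function `u : ℝⁿ → ℝ`. -/
noncomputable def laplacian {n : ℕ} (u : EuclideanSpace ℝ (Fin n) → ℝ)
    (x : EuclideanSpace ℝ (Fin n)) : ℝ :=
  ∑ i : Fin n,
    fderiv ℝ (fun y => fderiv ℝ u y (EuclideanSpace.single i (1 : ℝ))) x
      (EuclideanSpace.single i (1 : ℝ))

open Metric Set intervalIntegral

namespace HarmSup

noncomputable def bA : ContDiffBump ((3:ℝ)/4) := ⟨1/8, 1/4, by norm_num, by norm_num⟩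

noncomputable def gs (n : ℕ) (s t : ℝ) : ℝ := s ^ (-(n:ℝ)) * bA ((s^2)⁻¹ * t)

noncomputable def psi (n : ℕ) (ε R t : ℝ) : ℝ :=
  t ^ ((n:ℝ)/2 - 1) * (gs n ε t - gs n R t)

noncomputable def Pf (n : ℕ) (ε R t : ℝ) : ℝ := ∫ s in (0:ℝ)..t, psi n ε R s

noncomputable def Vf (n : ℕ) (ε R t : ℝ) : ℝ := 4⁻¹ * (t ^ (-(n:ℝ)/2) * Pf n ε R t)

noncomputable def Wf (n : ℕ) (ε R t : ℝ) : ℝ :=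
  4⁻¹ * (((-(n:ℝ)/2) * t ^ ((-(n:ℝ)/2) - 1)) * Pf n ε R t
    + t ^ (-(n:ℝ)/2) * psi n ε R t)

noncomputable def Qf (n : ℕ) (ε R t : ℝ) : ℝ := ∫ s in (R^2:ℝ)..t, Vf n ε R s

lemma bA_zero {t : ℝ} (h : t ≤ 1/2 ∨ 1 ≤ t) : bA t = 0 := by
  by_contra hne
  have := Function.mem_support.2 hne
  rw [bA.support_eq, Real.ball_eq_Ioo] at this
  have h1 := this.1
  have h2 := this.2
  unfold bA at h1 h2
  simp only at h1 h2
  rcases h with h | h <;> linarith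

lemma bA_nonneg (t : ℝ) : 0 ≤ bA t := bA.nonneg

lemma gs_zero {n : ℕ} {s : ℝ} (hs : 0 < s) {t : ℝ} (h : t ≤ s^2/2 ∨ s^2 ≤ t) :
    gs n s t = 0 := by
  have hs2 : (0:ℝ) < s^2 := by positivity
  have : bA ((s^2)⁻¹ * t) = 0 := by
    apply bA_zero
    rcases h with h | h
    · left
      rw [inv_mul_le_iff₀ hs2]; nlinarith
    · right
      rw [le_inv_mul_iff₀ hs2]; linarith
  simp [gs, this]

lemma gs_nonneg {n : ℕ} {s t : ℝ} (hs : 0 ≤ s) : 0 ≤ gs n s t := by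
  have : (0:ℝ) ≤ s ^ (-(n:ℝ)) := Real.rpow_nonneg hs _
  exact mul_nonneg this bA.nonneg

lemma gs_cont {n : ℕ} {s : ℝ} : Continuous (gs n s) :=
  continuous_const.mul (bA.continuous.comp (continuous_const.mul continuous_id))

/-- gluing: a function vanishing below a positive threshold and continuous on `(0,∞)`
is continuous. -/
lemma cont_glue {f : ℝ → ℝ} {c : ℝ} (hc : 0 < c) (h0 : ∀ t < c, f t = 0)
    (hf : ContinuousOn f (Set.Ioi 0)) : Continuous f := by
  rw [continuous_iff_continuousAt]
  intro t
  by_cases ht : t < c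
  · have : f =ᶠ[nhds t] fun _ => 0 :=
      Filter.eventually_of_mem (Iio_mem_nhds ht) (fun z hz => h0 z hz)
    exact ContinuousAt.congr continuousAt_const this.symm
  · push_neg at ht
    exact hf.continuousAt (Ioi_mem_nhds (lt_of_lt_of_le hc ht))

lemma psi_zero_low {n : ℕ} {ε R t : ℝ} (hε : 0 < ε) (hεR : ε ≤ R) (ht : t ≤ ε^2/2) :
    psi n ε R t = 0 := by
  have hR : 0 < R := lt_of_lt_of_le hε hεR
  have h1 : gs n ε t = 0 := gs_zero hε (Or.inl ht)
  have h2 : gs n R t = 0 := gs_zero hR (Or.inl (le_trans ht (by nlinarith)))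
  simp [psi, h1, h2]

lemma psi_zero_high {n : ℕ} {ε R t : ℝ} (hε : 0 < ε) (hεR : ε ≤ R) (ht : R^2 ≤ t) :
    psi n ε R t = 0 := by
  have hR : 0 < R := lt_of_lt_of_le hε hεR
  have h1 : gs n ε t = 0 := gs_zero hε (Or.inr (le_trans (by nlinarith) ht))
  have h2 : gs n R t = 0 := gs_zero hR (Or.inr ht)
  simp [psi, h1, h2]

lemma psi_cont {n : ℕ} {ε R : ℝ} (hε : 0 < ε) (hεR : ε ≤ R) :
    Continuous (psi n ε R) := by
  apply cont_glue (show (0:ℝ) < ε^2/2 by positivity)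
    (fun t ht => psi_zero_low hε hεR ht.le)
  apply ContinuousOn.mul
  · intro t ht
    exact (Real.continuousAt_rpow_const t _ (Or.inl (ne_of_gt ht))).continuousWithinAt
  · exact (gs_cont.sub gs_cont).continuousOn


lemma Pf_hasDeriv {n : ℕ} {ε R : ℝ} (hε : 0 < ε) (hεR : ε ≤ R) (t : ℝ) :
    HasDerivAt (Pf n ε R) (psi n ε R t) t := by
  have hc := psi_cont (n := n) hε hεR
  exact intervalIntegral.integral_hasDerivAt_right (hc.intervalIntegrable _ _)
    (hc.stronglyMeasurableAtFilter _ _) hc.continuousAt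

lemma Pf_cont {n : ℕ} {ε R : ℝ} (hε : 0 < ε) (hεR : ε ≤ R) :
    Continuous (Pf n ε R) := by
  rw [continuous_iff_continuousAt]
  exact fun t => (Pf_hasDeriv hε hεR t).continuousAt

lemma Pf_zero_low {n : ℕ} {ε R t : ℝ} (hε : 0 < ε) (hεR : ε ≤ R) (ht : t ≤ ε^2/2) :
    Pf n ε R t = 0 := by
  have : EqOn (psi n ε R) (fun _ => 0) (uIcc 0 t) := by
    intro s hs
    apply psi_zero_low hε hεR
    rcases le_total 0 t with h | h
    · rw [uIcc_of_le h] at hs; exact le_trans hs.2 ht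
    · rw [uIcc_of_ge h] at hs; exact le_trans hs.2 (by positivity)
  rw [Pf, intervalIntegral.integral_congr this]
  simp

lemma psi_supp {n : ℕ} {ε R : ℝ} (hε : 0 < ε) (hεR : ε ≤ R) :
    Function.support (psi n ε R) ⊆ Ioc 0 (R^2) := by
  intro s hs
  rw [Function.mem_support] at hs
  constructor
  · by_contra h
    push_neg at h
    exact hs (psi_zero_low hε hεR (le_trans h (by positivity)))
  · by_contra h
    push_neg at h
    exact hs (psi_zero_high hε hεR h.le)

/-- the 1D scaling identity : the weighted mass of `gs n s` is independent of `s`. -/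
lemma gs_mass {n : ℕ} {s : ℝ} (hs : 0 < s) :
    ∫ t : ℝ, t ^ ((n:ℝ)/2 - 1) * gs n s t = ∫ t : ℝ, t ^ ((n:ℝ)/2 - 1) * gs n 1 t := by
  have hs2 : (0:ℝ) < s^2 := by positivity
  have key : ∀ t : ℝ, t ^ ((n:ℝ)/2 - 1) * gs n s t
      = (s^2)⁻¹ * ((fun u : ℝ => u ^ ((n:ℝ)/2 - 1) * gs n 1 u) ((s^2)⁻¹ • t)) := by
    intro t
    simp only [smul_eq_mul]
    rcases le_or_gt t 0 with ht | ht
    · have h1 : gs n s t = 0 := gs_zero hs (Or.inl (le_trans ht (by positivity)))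
      have h2 : gs n 1 ((s^2)⁻¹ * t) = 0 := by
        apply gs_zero one_pos
        left
        have : (s^2)⁻¹ * t ≤ 0 := mul_nonpos_of_nonneg_of_nonpos (by positivity) ht
        linarith
      simp [h1, h2]
    · have h1 : ((s^2)⁻¹ * t) ^ ((n:ℝ)/2 - 1)
          = ((s^2)⁻¹) ^ ((n:ℝ)/2 - 1) * t ^ ((n:ℝ)/2 - 1) :=
        Real.mul_rpow (by positivity) ht.le
      have h2 : ((s^2)⁻¹ : ℝ) ^ ((n:ℝ)/2 - 1) = s ^ (2 - (n:ℝ)) := by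
        rw [← Real.rpow_neg_one (s^2), ← Real.rpow_natCast s 2,
          ← Real.rpow_mul hs.le, ← Real.rpow_mul hs.le]
        ring_nf
      have h3 : gs n 1 ((s^2)⁻¹ * t) = bA ((s^2)⁻¹ * t) := by
        simp [gs]
      have h4 : gs n s t = s ^ (-(n:ℝ)) * bA ((s^2)⁻¹ * t) := rfl
      rw [h3, h4, h1, h2]
      have h5 : (s^2)⁻¹ * (s ^ (2 - (n:ℝ)) * t ^ ((n:ℝ)/2 - 1) * bA ((s^2)⁻¹ * t))
          = ((s^2)⁻¹ * s ^ (2 - (n:ℝ))) * t ^ ((n:ℝ)/2 - 1) * bA ((s^2)⁻¹ * t) := by ring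
      rw [h5]
      have h6 : (s^2)⁻¹ * s ^ (2 - (n:ℝ)) = s ^ (-(n:ℝ)) := by
        rw [← Real.rpow_neg_one (s^2), ← Real.rpow_natCast s 2, ← Real.rpow_mul hs.le,
          ← Real.rpow_add hs]
        congr 1
        ring
      rw [h6]; ring
  calc ∫ t : ℝ, t ^ ((n:ℝ)/2 - 1) * gs n s t
      = ∫ t : ℝ, (s^2)⁻¹ * ((fun u : ℝ => u ^ ((n:ℝ)/2 - 1) * gs n 1 u) ((s^2)⁻¹ • t)) := by
        congr 1; funext t; exact key t
    _ = (s^2)⁻¹ * ∫ t : ℝ, (fun u : ℝ => u ^ ((n:ℝ)/2 - 1) * gs n 1 u) ((s^2)⁻¹ • t) :=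
        integral_const_mul _ _
    _ = ∫ t : ℝ, t ^ ((n:ℝ)/2 - 1) * gs n 1 t := by
        rw [MeasureTheory.Measure.integral_comp_inv_smul volume
          (fun u : ℝ => u ^ ((n:ℝ)/2 - 1) * gs n 1 u) (s^2)]
        simp only [Module.finrank_self, pow_one, abs_of_pos hs2, smul_eq_mul]
        rw [← mul_assoc, inv_mul_cancel₀ (ne_of_gt hs2), one_mul]

lemma phi_integrable {n : ℕ} {s : ℝ} (hs : 0 < s) :
    Integrable (fun t : ℝ => t ^ ((n:ℝ)/2 - 1) * gs n s t) := by
  have hcont : Continuous (fun t : ℝ => t ^ ((n:ℝ)/2 - 1) * gs n s t) := by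
    apply cont_glue (show (0:ℝ) < s^2/2 by positivity)
    · intro t ht
      rw [gs_zero hs (Or.inl ht.le), mul_zero]
    · exact ContinuousOn.mul
        (fun t ht => (Real.continuousAt_rpow_const t _ (Or.inl (ne_of_gt ht))).continuousWithinAt)
        gs_cont.continuousOn
  apply hcont.integrable_of_hasCompactSupport
  apply HasCompactSupport.intro (isCompact_Icc (a := (0:ℝ)) (b := s^2))
  intro t ht
  rw [mem_Icc] at ht
  push_neg at ht
  rcases le_or_gt t 0 with h | h
  · rw [gs_zero hs (Or.inl (le_trans h (by positivity))), mul_zero]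
  · rw [gs_zero hs (Or.inr (ht h.le).le), mul_zero]

lemma Pf_zero_high {n : ℕ} {ε R t : ℝ} (hε : 0 < ε) (hεR : ε ≤ R) (ht : R^2 ≤ t) :
    Pf n ε R t = 0 := by
  have hR : 0 < R := lt_of_lt_of_le hε hεR
  have hint : ∀ a b : ℝ, IntervalIntegrable (psi n ε R) volume a b :=
    fun a b => (psi_cont hε hεR).intervalIntegrable a b
  have hsplit : Pf n ε R t = Pf n ε R (R^2) + ∫ s in (R^2)..t, psi n ε R s := by
    rw [Pf, Pf, intervalIntegral.integral_add_adjacent_intervals (hint _ _) (hint _ _)]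
  have h2 : (∫ s in (R^2)..t, psi n ε R s) = 0 := by
    have : EqOn (psi n ε R) (fun _ => 0) (uIcc (R^2) t) := by
      intro s hs
      rw [uIcc_of_le ht] at hs
      exact psi_zero_high hε hεR hs.1
    rw [intervalIntegral.integral_congr this]; simp
  have h1 : Pf n ε R (R^2) = 0 := by
    rw [Pf, intervalIntegral.integral_eq_integral_of_support_subset (psi_supp hε hεR)]
    have : ∀ u : ℝ, psi n ε R u
        = u ^ ((n:ℝ)/2 - 1) * gs n ε u - u ^ ((n:ℝ)/2 - 1) * gs n R u := by
      intro u; rw [psi]; ring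
    rw [MeasureTheory.integral_congr_ae (Filter.Eventually.of_forall this),
      MeasureTheory.integral_sub (phi_integrable hε) (phi_integrable hR),
      gs_mass hε, gs_mass hR, sub_self]
  rw [hsplit, h1, h2, add_zero]


lemma Vf_zero_low {n : ℕ} {ε R t : ℝ} (hε : 0 < ε) (hεR : ε ≤ R) (ht : t ≤ ε^2/2) :
    Vf n ε R t = 0 := by
  rw [Vf, Pf_zero_low hε hεR ht, mul_zero, mul_zero]

lemma Vf_zero_high {n : ℕ} {ε R t : ℝ} (hε : 0 < ε) (hεR : ε ≤ R) (ht : R^2 ≤ t) :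
    Vf n ε R t = 0 := by
  rw [Vf, Pf_zero_high hε hεR ht, mul_zero, mul_zero]

lemma Wf_zero_low {n : ℕ} {ε R t : ℝ} (hε : 0 < ε) (hεR : ε ≤ R) (ht : t ≤ ε^2/2) :
    Wf n ε R t = 0 := by
  rw [Wf, Pf_zero_low hε hεR ht, psi_zero_low hε hεR ht]
  ring

lemma Wf_zero_high {n : ℕ} {ε R t : ℝ} (hε : 0 < ε) (hεR : ε ≤ R) (ht : R^2 ≤ t) :
    Wf n ε R t = 0 := by
  rw [Wf, Pf_zero_high hε hεR ht, psi_zero_high hε hεR ht]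
  ring

lemma Vf_cont {n : ℕ} {ε R : ℝ} (hε : 0 < ε) (hεR : ε ≤ R) : Continuous (Vf n ε R) := by
  apply cont_glue (show (0:ℝ) < ε^2/2 by positivity)
    (fun t ht => Vf_zero_low hε hεR ht.le)
  exact (continuousOn_const.mul (ContinuousOn.mul
    (fun t ht => (Real.continuousAt_rpow_const t _ (Or.inl (ne_of_gt ht))).continuousWithinAt)
    (Pf_cont hε hεR).continuousOn))

lemma Wf_cont {n : ℕ} {ε R : ℝ} (hε : 0 < ε) (hεR : ε ≤ R) : Continuous (Wf n ε R) := by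
  apply cont_glue (show (0:ℝ) < ε^2/2 by positivity)
    (fun t ht => Wf_zero_low hε hεR ht.le)
  apply continuousOn_const.mul
  apply ContinuousOn.add
  · exact (continuousOn_const.mul
      (fun t ht => (Real.continuousAt_rpow_const t _ (Or.inl (ne_of_gt ht))).continuousWithinAt)).mul
      (Pf_cont hε hεR).continuousOn
  · exact ContinuousOn.mul
      (fun t ht => (Real.continuousAt_rpow_const t _ (Or.inl (ne_of_gt ht))).continuousWithinAt)
      (psi_cont hε hεR).continuousOn

lemma Vf_hasDeriv {n : ℕ} {ε R : ℝ} (hε : 0 < ε) (hεR : ε ≤ R) (t : ℝ) :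
    HasDerivAt (Vf n ε R) (Wf n ε R t) t := by
  rcases lt_or_ge t (ε^2/2) with ht | ht
  · have h0 : Wf n ε R t = 0 := Wf_zero_low hε hεR ht.le
    rw [h0]
    apply HasDerivAt.congr_of_eventuallyEq (hasDerivAt_const t 0)
    exact Filter.eventually_of_mem (Iio_mem_nhds ht)
      (fun z hz => Vf_zero_low hε hεR (le_of_lt hz))
  · have htpos : 0 < t := lt_of_lt_of_le (by positivity) ht
    have h1 : HasDerivAt (fun u : ℝ => u ^ (-(n:ℝ)/2))
        ((-(n:ℝ)/2) * t ^ ((-(n:ℝ)/2) - 1)) t :=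
      Real.hasDerivAt_rpow_const (Or.inl (ne_of_gt htpos))
    have h2 := (h1.mul (Pf_hasDeriv (n := n) hε hεR t)).const_mul (4⁻¹:ℝ)
    exact h2

lemma Qf_hasDeriv {n : ℕ} {ε R : ℝ} (hε : 0 < ε) (hεR : ε ≤ R) (t : ℝ) :
    HasDerivAt (Qf n ε R) (Vf n ε R t) t := by
  have hc := Vf_cont (n := n) hε hεR
  exact intervalIntegral.integral_hasDerivAt_right (hc.intervalIntegrable _ _)
    (hc.stronglyMeasurableAtFilter _ _) hc.continuousAt

lemma Qf_zero_high {n : ℕ} {ε R t : ℝ} (hε : 0 < ε) (hεR : ε ≤ R) (ht : R^2 ≤ t) :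
    Qf n ε R t = 0 := by
  have : EqOn (Vf n ε R) (fun _ => 0) (uIcc (R^2) t) := by
    intro s hs
    rw [uIcc_of_le ht] at hs
    exact Vf_zero_high hε hεR hs.1
  rw [Qf, intervalIntegral.integral_congr this]
  simp

/-- the main radial ODE identity. -/
lemma main_ode {n : ℕ} {ε R t : ℝ} (hε : 0 < ε) (hεR : ε ≤ R) (ht : 0 ≤ t) :
    4 * (Wf n ε R t * t) + 2 * n * Vf n ε R t = gs n ε t - gs n R t := by
  rcases eq_or_lt_of_le ht with h0 | htpos
  · have h0 : t = 0 := h0.symm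
    subst h0
    have hR : 0 < R := lt_of_lt_of_le hε hεR
    rw [Wf_zero_low hε hεR (by positivity), Vf_zero_low hε hεR (by positivity),
      gs_zero hε (Or.inl (by positivity)), gs_zero hR (Or.inl (by positivity))]
    ring
  · have e1 : t ^ ((-(n:ℝ)/2) - 1) * t = t ^ (-(n:ℝ)/2) := by
      rw [← Real.rpow_add_one (ne_of_gt htpos)]
      norm_num
    have e2 : t ^ (-(n:ℝ)/2) * (t ^ ((n:ℝ)/2 - 1) * t) = 1 := by
      rw [← Real.rpow_add_one (ne_of_gt htpos), ← Real.rpow_add htpos]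
      rw [show -(n:ℝ)/2 + ((n:ℝ)/2 - 1 + 1) = 0 by ring, Real.rpow_zero]
    rw [Wf, Vf, psi]
    have expand : 4 * (4⁻¹ * ((-(n:ℝ)/2 * t ^ ((-(n:ℝ)/2) - 1)) * Pf n ε R t
          + t ^ (-(n:ℝ)/2) * (t ^ ((n:ℝ)/2 - 1) * (gs n ε t - gs n R t))) * t)
          + 2 * n * (4⁻¹ * (t ^ (-(n:ℝ)/2) * Pf n ε R t))
        = (-(n:ℝ)/2 * (t ^ ((-(n:ℝ)/2) - 1) * t)) * Pf n ε R t
          + (t ^ (-(n:ℝ)/2) * (t ^ ((n:ℝ)/2 - 1) * t)) * (gs n ε t - gs n R t)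
          + (n/2) * t ^ (-(n:ℝ)/2) * Pf n ε R t := by ring
    rw [expand, e1, e2]
    ring


lemma Qf_cont {n : ℕ} {ε R : ℝ} (hε : 0 < ε) (hεR : ε ≤ R) : Continuous (Qf n ε R) := by
  rw [continuous_iff_continuousAt]
  exact fun t => (Qf_hasDeriv hε hεR t).continuousAt

variable {n : ℕ}

noncomputable def Nf (x y : EuclideanSpace ℝ (Fin n)) : ℝ := ‖y - x‖^2

lemma Nf_nonneg (x y : EuclideanSpace ℝ (Fin n)) : 0 ≤ Nf x y := sq_nonneg _

lemma Nf_cont (x : EuclideanSpace ℝ (Fin n)) : Continuous (Nf x) :=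
  ((continuous_id.sub continuous_const).norm).pow 2

lemma Nf_hasFDeriv (x y : EuclideanSpace ℝ (Fin n)) :
    HasFDerivAt (Nf x) ((2:ℕ) • (innerSL ℝ (y - x))) y := by
  have h := (hasStrictFDerivAt_norm_sq (y - x)).hasFDerivAt
  have h2 : HasFDerivAt (fun z : EuclideanSpace ℝ (Fin n) => z - x)
      (ContinuousLinearMap.id ℝ (EuclideanSpace ℝ (Fin n))) y :=
    (hasFDerivAt_id y).sub_const x
  have h3 := h.comp y h2
  exact h3

noncomputable def chi (n : ℕ) (ε R : ℝ) (x : EuclideanSpace ℝ (Fin n))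
    (y : EuclideanSpace ℝ (Fin n)) : ℝ := Qf n ε R (Nf x y)

noncomputable def chi1 (n : ℕ) (ε R : ℝ) (x : EuclideanSpace ℝ (Fin n)) (i : Fin n)
    (y : EuclideanSpace ℝ (Fin n)) : ℝ :=
  Vf n ε R (Nf x y) *
    (2 * (inner ℝ (EuclideanSpace.single i (1:ℝ)) (y - x) : ℝ))

lemma chi_hasFDeriv {ε R : ℝ} (hε : 0 < ε) (hεR : ε ≤ R)
    (x y : EuclideanSpace ℝ (Fin n)) :
    HasFDerivAt (chi n ε R x)
      (Vf n ε R (Nf x y) • ((2:ℕ) • (innerSL ℝ (y - x)))) y :=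
  (Qf_hasDeriv hε hεR (Nf x y)).comp_hasFDerivAt y (Nf_hasFDeriv x y)

lemma fderiv_chi_apply {ε R : ℝ} (hε : 0 < ε) (hεR : ε ≤ R)
    (x y : EuclideanSpace ℝ (Fin n)) (i : Fin n) :
    fderiv ℝ (chi n ε R x) y (EuclideanSpace.single i (1:ℝ)) = chi1 n ε R x i y := by
  rw [(chi_hasFDeriv hε hεR x y).fderiv]
  simp only [ContinuousLinearMap.smul_apply, innerSL_apply_apply, smul_eq_mul, nsmul_eq_mul,
    Nat.cast_ofNat, chi1]
  rw [real_inner_comm]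

lemma chi1_hasFDeriv {ε R : ℝ} (hε : 0 < ε) (hεR : ε ≤ R)
    (x y : EuclideanSpace ℝ (Fin n)) (i : Fin n) :
    HasFDerivAt (chi1 n ε R x i)
      ((Vf n ε R (Nf x y)) •
          ((2:ℝ) • (innerSL ℝ (EuclideanSpace.single i (1:ℝ))))
        + (2 * (inner ℝ (EuclideanSpace.single i (1:ℝ)) (y - x) : ℝ)) •
          (Wf n ε R (Nf x y) • ((2:ℕ) • (innerSL ℝ (y - x))))) y := by
  have hA : HasFDerivAt (fun z => Vf n ε R (Nf x z))
      (Wf n ε R (Nf x y) • ((2:ℕ) • (innerSL ℝ (y - x)))) y :=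
    (Vf_hasDeriv hε hεR (Nf x y)).comp_hasFDerivAt y (Nf_hasFDeriv x y)
  have hB0 : HasFDerivAt
      (fun z : EuclideanSpace ℝ (Fin n) =>
        (innerSL ℝ (EuclideanSpace.single i (1:ℝ))) (z - x))
      ((innerSL ℝ (EuclideanSpace.single i (1:ℝ))).comp
        (ContinuousLinearMap.id ℝ (EuclideanSpace ℝ (Fin n)))) y :=
    (innerSL ℝ (EuclideanSpace.single i (1:ℝ))).hasFDerivAt.comp y
      ((hasFDerivAt_id y).sub_const x)
  have hB : HasFDerivAt
      (fun z : EuclideanSpace ℝ (Fin n) =>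
        2 * (inner ℝ (EuclideanSpace.single i (1:ℝ)) (z - x) : ℝ))
      ((2:ℝ) • (innerSL ℝ (EuclideanSpace.single i (1:ℝ)))) y := by
    have := hB0.const_mul (2:ℝ)
    simpa using this
  have := hA.mul hB
  exact this

lemma sum_sq_coords (z : EuclideanSpace ℝ (Fin n)) :
    ∑ i : Fin n, (z i)^2 = ‖z‖^2 := by
  rw [EuclideanSpace.norm_eq, Real.sq_sqrt (by positivity)]
  congr 1
  funext i
  rw [Real.norm_eq_abs, sq_abs]

lemma laplacian_chi {ε R : ℝ} (hε : 0 < ε) (hεR : ε ≤ R)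
    (x y : EuclideanSpace ℝ (Fin n)) :
    laplacian (chi n ε R x) y = gs n ε (Nf x y) - gs n R (Nf x y) := by
  unfold laplacian
  have hrw : ∀ i : Fin n, (fun z => fderiv ℝ (chi n ε R x) z (EuclideanSpace.single i (1:ℝ)))
      = chi1 n ε R x i := fun i => funext (fun z => fderiv_chi_apply hε hεR x z i)
  have happ : ∀ i : Fin n,
      fderiv ℝ (chi1 n ε R x i) y (EuclideanSpace.single i (1:ℝ))
        = 2 * Vf n ε R (Nf x y) + 4 * Wf n ε R (Nf x y) * ((y - x) i)^2 := by
    intro i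
    rw [(chi1_hasFDeriv hε hεR x y i).fderiv]
    have hinner1 : (inner ℝ (EuclideanSpace.single i (1:ℝ)) (EuclideanSpace.single i (1:ℝ)) : ℝ)
        = 1 := by
      rw [EuclideanSpace.inner_single_left]
      simp [EuclideanSpace.single_apply]
    have hinner2 : (inner ℝ (EuclideanSpace.single i (1:ℝ)) (y - x) : ℝ) = (y - x) i := by
      rw [EuclideanSpace.inner_single_left]
      simp
    have hinner3 : (inner ℝ (y - x) (EuclideanSpace.single i (1:ℝ)) : ℝ) = (y - x) i := by
      rw [real_inner_comm]; exact hinner2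
    simp only [ContinuousLinearMap.add_apply, ContinuousLinearMap.smul_apply, innerSL_apply_apply,
      smul_eq_mul, nsmul_eq_mul, Nat.cast_ofNat, hinner1, hinner2, hinner3]
    ring
  calc ∑ i : Fin n, fderiv ℝ
        (fun z => fderiv ℝ (chi n ε R x) z (EuclideanSpace.single i (1:ℝ))) y
        (EuclideanSpace.single i (1:ℝ))
      = ∑ i : Fin n, (2 * Vf n ε R (Nf x y) + 4 * Wf n ε R (Nf x y) * ((y - x) i)^2) := by
        apply Finset.sum_congr rfl
        intro i _
        rw [hrw i, happ i]
    _ = 2 * n * Vf n ε R (Nf x y) + 4 * (Wf n ε R (Nf x y) * Nf x y) := by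
        rw [Finset.sum_add_distrib, Finset.sum_const, ← Finset.mul_sum, sum_sq_coords]
        simp only [Finset.card_univ, Fintype.card_fin, nsmul_eq_mul, Nf]
        ring
    _ = gs n ε (Nf x y) - gs n R (Nf x y) := by
        rw [← main_ode hε hεR (Nf_nonneg x y)]
        ring

lemma Nf_big {x y : EuclideanSpace ℝ (Fin n)} {R : ℝ} (hR : 0 ≤ R)
    (h : y ∉ closedBall x R) : R^2 ≤ Nf x y := by
  rw [mem_closedBall, dist_eq_norm] at h
  push_neg at h
  calc R^2 ≤ ‖y - x‖^2 := by
        apply pow_le_pow_left₀ hR h.le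
    _ = Nf x y := rfl

lemma chi_zero {ε R : ℝ} (hε : 0 < ε) (hεR : ε ≤ R) {x y : EuclideanSpace ℝ (Fin n)}
    (h : y ∉ closedBall x R) : chi n ε R x y = 0 :=
  Qf_zero_high hε hεR (Nf_big (le_trans hε.le hεR) h)

lemma chi1_zero {ε R : ℝ} (hε : 0 < ε) (hεR : ε ≤ R) {x : EuclideanSpace ℝ (Fin n)}
    (i : Fin n) {y : EuclideanSpace ℝ (Fin n)}
    (h : y ∉ closedBall x R) : chi1 n ε R x i y = 0 := by
  rw [chi1, Vf_zero_high hε hεR (Nf_big (le_trans hε.le hεR) h), zero_mul]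

lemma chi_cont {ε R : ℝ} (hε : 0 < ε) (hεR : ε ≤ R) (x : EuclideanSpace ℝ (Fin n)) :
    Continuous (chi n ε R x) := (Qf_cont hε hεR).comp (Nf_cont x)

lemma chi1_cont {ε R : ℝ} (hε : 0 < ε) (hεR : ε ≤ R) (x : EuclideanSpace ℝ (Fin n))
    (i : Fin n) : Continuous (chi1 n ε R x i) := by
  apply ((Vf_cont hε hεR).comp (Nf_cont x)).mul
  exact continuous_const.mul
    ((continuous_const.inner (continuous_id.sub continuous_const)))


lemma fderiv_chi1_apply {ε R : ℝ} (hε : 0 < ε) (hεR : ε ≤ R)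
    (x y : EuclideanSpace ℝ (Fin n)) (i : Fin n) :
    fderiv ℝ (chi1 n ε R x i) y (EuclideanSpace.single i (1:ℝ))
      = 2 * Vf n ε R (Nf x y) + 4 * Wf n ε R (Nf x y) * ((y - x) i)^2 := by
  rw [(chi1_hasFDeriv hε hεR x y i).fderiv]
  have hinner1 : (inner ℝ (EuclideanSpace.single i (1:ℝ)) (EuclideanSpace.single i (1:ℝ)) : ℝ)
      = 1 := by
    rw [EuclideanSpace.inner_single_left]
    simp [EuclideanSpace.single_apply]
  have hinner2 : (inner ℝ (EuclideanSpace.single i (1:ℝ)) (y - x) : ℝ) = (y - x) i := by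
    rw [EuclideanSpace.inner_single_left]; simp
  have hinner3 : (inner ℝ (y - x) (EuclideanSpace.single i (1:ℝ)) : ℝ) = (y - x) i := by
    rw [real_inner_comm]; exact hinner2
  simp only [ContinuousLinearMap.add_apply, ContinuousLinearMap.smul_apply, innerSL_apply_apply,
    smul_eq_mul, nsmul_eq_mul, Nat.cast_ofNat, hinner1, hinner2, hinner3]
  ring

lemma chi2_zero {ε R : ℝ} (hε : 0 < ε) (hεR : ε ≤ R) {x : EuclideanSpace ℝ (Fin n)}
    (i : Fin n) {y : EuclideanSpace ℝ (Fin n)} (h : y ∉ closedBall x R) :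
    2 * Vf n ε R (Nf x y) + 4 * Wf n ε R (Nf x y) * ((y - x) i)^2 = 0 := by
  rw [Vf_zero_high hε hεR (Nf_big (le_trans hε.le hεR) h),
    Wf_zero_high hε hεR (Nf_big (le_trans hε.le hεR) h)]
  ring

lemma integrable_of_zero_outside {f : EuclideanSpace ℝ (Fin n) → ℝ} (hc : Continuous f)
    {x : EuclideanSpace ℝ (Fin n)} {R : ℝ}
    (h0 : ∀ y ∉ closedBall x R, f y = 0) : Integrable f :=
  hc.integrable_of_hasCompactSupport
    (HasCompactSupport.intro (isCompact_closedBall x R) h0)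

lemma green {ε R : ℝ} (hε : 0 < ε) (hεR : ε ≤ R) (x : EuclideanSpace ℝ (Fin n))
    (w : EuclideanSpace ℝ (Fin n) → ℝ) (hw : ContDiff ℝ ((⊤ : ℕ∞) : WithTop ℕ∞) w)
    (hharm : ∀ y ∈ ball x (2*R), laplacian w y = 0) :
    ∫ y, w y * (gs n ε (Nf x y) - gs n R (Nf x y)) = 0 := by
  have hR : 0 < R := lt_of_lt_of_le hε hεR
  set v : Fin n → EuclideanSpace ℝ (Fin n) := fun i => EuclideanSpace.single i (1:ℝ) with hv
  -- first derivatives of w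
  have htop : ((⊤ : ℕ∞) : WithTop ℕ∞) + 1 ≤ ((⊤ : ℕ∞) : WithTop ℕ∞) := by
    norm_cast
  have h1top : (1 : WithTop ℕ∞) ≤ ((⊤ : ℕ∞) : WithTop ℕ∞) := by
    exact_mod_cast le_top
  have hw1 : ∀ i : Fin n, ContDiff ℝ ((⊤ : ℕ∞) : WithTop ℕ∞) (fun y => fderiv ℝ w y (v i)) :=
    fun i => (hw.fderiv_right htop).clm_apply contDiff_const
  have hw2 : ∀ i : Fin n,
      ContDiff ℝ ((⊤ : ℕ∞) : WithTop ℕ∞)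
        (fun y => fderiv ℝ (fun z => fderiv ℝ w z (v i)) y (v i)) :=
    fun i => ((hw1 i).fderiv_right htop).clm_apply contDiff_const
  -- rewriting lemmas
  have hrw1 : ∀ i : Fin n, ∀ y, fderiv ℝ (chi n ε R x) y (v i) = chi1 n ε R x i y :=
    fun i y => fderiv_chi_apply hε hεR x y i
  have hrw2 : ∀ i : Fin n, ∀ y, fderiv ℝ (chi1 n ε R x i) y (v i)
      = 2 * Vf n ε R (Nf x y) + 4 * Wf n ε R (Nf x y) * ((y - x) i)^2 :=
    fun i y => fderiv_chi1_apply hε hεR x y i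
  have hchi2cont : ∀ i : Fin n, Continuous
      (fun y => 2 * Vf n ε R (Nf x y) + 4 * Wf n ε R (Nf x y) * ((y - x) i)^2) := by
    intro i
    apply (continuous_const.mul ((Vf_cont hε hεR).comp (Nf_cont x))).add
    apply (continuous_const.mul ((Wf_cont hε hεR).comp (Nf_cont x))).mul
    exact (((EuclideanSpace.proj (𝕜 := ℝ) i).continuous).comp (continuous_id.sub continuous_const)).pow 2
  -- per-direction double integration by parts
  have step : ∀ i : Fin n,
      (∫ y, w y * fderiv ℝ (chi1 n ε R x i) y (v i))
        = ∫ y, (fderiv ℝ (fun z => fderiv ℝ w z (v i)) y (v i)) * chi n ε R x y := by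
    intro i
    have I3 : Integrable (fun y => w y * chi1 n ε R x i y) :=
      integrable_of_zero_outside (hw.continuous.mul (chi1_cont hε hεR x i))
        (fun y hy => by rw [chi1_zero hε hεR i hy, mul_zero])
    have I1 : Integrable (fun y => w y * fderiv ℝ (chi1 n ε R x i) y (v i)) := by
      simp only [hrw2 i]
      exact integrable_of_zero_outside (hw.continuous.mul (hchi2cont i))
        (fun y hy => by rw [chi2_zero hε hεR i hy, mul_zero])
    have I2 : Integrable (fun y => fderiv ℝ w y (v i) * chi1 n ε R x i y) :=
      integrable_of_zero_outside ((hw1 i).continuous.mul (chi1_cont hε hεR x i))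
        (fun y hy => by rw [chi1_zero hε hεR i hy, mul_zero])
    have ibp1 : (∫ y, w y * fderiv ℝ (chi1 n ε R x i) y (v i))
        = - ∫ y, fderiv ℝ w y (v i) * chi1 n ε R x i y :=
      integral_mul_fderiv_eq_neg_fderiv_mul_of_integrable I2 I1 I3
        (fun y _ => (hw.differentiable (by simp)) y)
        (fun y _ => ((chi1_hasFDeriv hε hεR x y i).differentiableAt))
    have I4 : Integrable (fun y => fderiv ℝ w y (v i) * chi n ε R x y) :=
      integrable_of_zero_outside ((hw1 i).continuous.mul (chi_cont hε hεR x))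
        (fun y hy => by rw [chi_zero hε hεR hy, mul_zero])
    have I5 : Integrable (fun y =>
        fderiv ℝ (fun z => fderiv ℝ w z (v i)) y (v i) * chi n ε R x y) :=
      integrable_of_zero_outside ((hw2 i).continuous.mul (chi_cont hε hεR x))
        (fun y hy => by rw [chi_zero hε hεR hy, mul_zero])
    have I6 : Integrable (fun y => fderiv ℝ w y (v i) * fderiv ℝ (chi n ε R x) y (v i)) := by
      simp only [hrw1 i]
      exact I2
    have ibp2 : (∫ y, fderiv ℝ w y (v i) * fderiv ℝ (chi n ε R x) y (v i))
        = - ∫ y, fderiv ℝ (fun z => fderiv ℝ w z (v i)) y (v i) * chi n ε R x y :=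
      integral_mul_fderiv_eq_neg_fderiv_mul_of_integrable I5 I6 I4
        (fun y _ => ((hw1 i).differentiable (by simp)) y)
        (fun y _ => (chi_hasFDeriv hε hεR x y).differentiableAt)
    rw [ibp1]
    simp only [← hrw1 i] at ibp1 ⊢
    rw [ibp2]
    ring_nf
  -- assembling
  have lhs_eq : (∫ y, w y * (gs n ε (Nf x y) - gs n R (Nf x y)))
      = ∑ i : Fin n, ∫ y, w y * fderiv ℝ (chi1 n ε R x i) y (v i) := by
    rw [← MeasureTheory.integral_finset_sum]
    · congr 1
      funext y
      rw [← laplacian_chi hε hεR x y]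
      unfold laplacian
      rw [Finset.mul_sum]
      apply Finset.sum_congr rfl
      intro i _
      congr 1
      rw [show (fun z => fderiv ℝ (chi n ε R x) z (EuclideanSpace.single i (1:ℝ)))
          = chi1 n ε R x i from funext (fun z => hrw1 i z)]
    · intro i _
      simp only [hrw2 i]
      exact integrable_of_zero_outside (hw.continuous.mul (hchi2cont i))
        (fun y hy => by rw [chi2_zero hε hεR i hy, mul_zero])
  rw [lhs_eq]
  have : ∀ i : Fin n, (∫ y, w y * fderiv ℝ (chi1 n ε R x i) y (v i))
      = ∫ y, (fderiv ℝ (fun z => fderiv ℝ w z (v i)) y (v i)) * chi n ε R x y := step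
  rw [Finset.sum_congr rfl (fun i _ => this i), ← MeasureTheory.integral_finset_sum]
  · have : ∀ y, (∑ i : Fin n,
        fderiv ℝ (fun z => fderiv ℝ w z (v i)) y (v i) * chi n ε R x y) = 0 := by
      intro y
      rw [← Finset.sum_mul]
      by_cases hy : y ∈ ball x (2*R)
      · rw [show (∑ i : Fin n, fderiv ℝ (fun z => fderiv ℝ w z (v i)) y (v i))
            = laplacian w y from rfl, hharm y hy, zero_mul]
      · have : y ∉ closedBall x R := by
          intro hc
          exact hy (lt_of_le_of_lt (mem_closedBall.1 hc) (by linarith))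
        rw [chi_zero hε hεR this, mul_zero]
    rw [MeasureTheory.integral_congr_ae (Filter.Eventually.of_forall this)]
    simp
  · intro i _
    exact integrable_of_zero_outside ((hw2 i).continuous.mul (chi_cont hε hεR x))
      (fun y hy => by rw [chi_zero hε hεR hy, mul_zero])

lemma gs_comp_mass {s : ℝ} (hs : 0 < s) (x : EuclideanSpace ℝ (Fin n)) :
    ∫ y, gs n s (Nf x y) = ∫ z : EuclideanSpace ℝ (Fin n), bA (‖z‖^2) := by
  have h1 : (∫ y, gs n s (Nf x y))
      = ∫ z : EuclideanSpace ℝ (Fin n), gs n s (‖z‖^2) := by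
    have : ∀ y : EuclideanSpace ℝ (Fin n),
        gs n s (Nf x y) = (fun z : EuclideanSpace ℝ (Fin n) => gs n s (‖z‖^2)) (y - x) :=
      fun y => rfl
    rw [MeasureTheory.integral_congr_ae (Filter.Eventually.of_forall this),
      integral_sub_right_eq_self (fun z : EuclideanSpace ℝ (Fin n) => gs n s (‖z‖^2)) x]
  have h2 : ∀ z : EuclideanSpace ℝ (Fin n),
      gs n s (‖z‖^2) = s ^ (-(n:ℝ)) *
        ((fun z' : EuclideanSpace ℝ (Fin n) => bA (‖z'‖^2)) (s⁻¹ • z)) := by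
    intro z
    have : ‖s⁻¹ • z‖^2 = (s^2)⁻¹ * ‖z‖^2 := by
      rw [norm_smul]
      rw [norm_inv, Real.norm_eq_abs, abs_of_pos hs]
      ring
    simp only [this]
    rfl
  rw [h1, MeasureTheory.integral_congr_ae (Filter.Eventually.of_forall h2),
    MeasureTheory.integral_const_mul,
    MeasureTheory.Measure.integral_comp_inv_smul volume
      (fun z' : EuclideanSpace ℝ (Fin n) => bA (‖z'‖^2)) s]
  rw [finrank_euclideanSpace_fin, abs_of_pos (pow_pos hs n), smul_eq_mul, ← mul_assoc]
  rw [show (s:ℝ) ^ (n:ℕ) = s ^ ((n:ℕ):ℝ) from (Real.rpow_natCast s n).symm,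
    ← Real.rpow_add hs]
  simp

lemma bA_comp_integrable : Integrable (fun z : EuclideanSpace ℝ (Fin n) => bA (‖z‖^2)) := by
  apply integrable_of_zero_outside (x := 0) (R := 1)
    (bA.continuous.comp ((continuous_norm).pow 2))
  intro y hy
  rw [mem_closedBall, dist_zero_right] at hy
  push_neg at hy
  apply bA_zero
  right
  show (1:ℝ) ≤ ‖y‖^2
  nlinarith [norm_nonneg y]

lemma kappa_pos (hn : 0 < n) : 0 < ∫ z : EuclideanSpace ℝ (Fin n), bA (‖z‖^2) := by
  set S : Set (EuclideanSpace ℝ (Fin n)) :=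
    (fun z : EuclideanSpace ℝ (Fin n) => ‖z‖^2) ⁻¹' (Ioo (5/8 : ℝ) (7/8)) with hS
  have hcont : Continuous (fun z : EuclideanSpace ℝ (Fin n) => ‖z‖^2) :=
    (continuous_norm).pow 2
  have hSopen : IsOpen S := isOpen_Ioo.preimage hcont
  have hSne : S.Nonempty := by
    refine ⟨EuclideanSpace.single ⟨0, hn⟩ (Real.sqrt (3/4)), ?_⟩
    have hns : ‖EuclideanSpace.single (⟨0, hn⟩ : Fin n) (Real.sqrt (3/4))‖^2 = 3/4 := by
      rw [EuclideanSpace.norm_single, Real.norm_eq_abs,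
        abs_of_nonneg (Real.sqrt_nonneg _)]
      exact Real.sq_sqrt (by norm_num)
    simp only [hS, mem_preimage, mem_Ioo, hns]
    norm_num
  have hmeas : (0:ENNReal) < volume S := hSopen.measure_pos volume hSne
  have hfin : volume S < ⊤ := by
    apply lt_of_le_of_lt (measure_mono (show S ⊆ ball 0 1 from ?_)) measure_ball_lt_top
    intro z hz
    simp only [hS, mem_preimage, mem_Ioo] at hz
    rw [mem_ball, dist_zero_right]
    nlinarith [hz.2, norm_nonneg z]
  have h1 : (∫ z in S, bA (‖z‖^2)) = (volume S).toReal := by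
    rw [setIntegral_congr_fun hSopen.measurableSet
      (g := fun _ => (1:ℝ)) (fun z hz => ?_)]
    · rw [setIntegral_const]; simp [measureReal_def]
    · simp only [hS, mem_preimage, mem_Ioo] at hz
      apply bA.one_of_mem_closedBall
      rw [mem_closedBall, Real.dist_eq, abs_le]
      unfold bA
      constructor <;> simp <;> linarith [hz.1, hz.2]
  have h2 : (∫ z in S, bA (‖z‖^2)) ≤ ∫ z : EuclideanSpace ℝ (Fin n), bA (‖z‖^2) :=
    setIntegral_le_integral bA_comp_integrable
      (Filter.Eventually.of_forall (fun z => bA.nonneg))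
  have h3 : (0:ℝ) < (volume S).toReal := ENNReal.toReal_pos hmeas.ne' hfin.ne
  linarith [h1 ▸ h2]

lemma key_estimate (hn : 0 < n) (x : EuclideanSpace ℝ (Fin n)) {R : ℝ} (hR : 0 < R)
    (w : EuclideanSpace ℝ (Fin n) → ℝ) (hw : ContDiff ℝ ((⊤ : ℕ∞) : WithTop ℕ∞) w)
    (hharm : ∀ y ∈ ball x (2*R), laplacian w y = 0) :
    |w x| ≤ ((∫ z : EuclideanSpace ℝ (Fin n), bA (‖z‖^2))⁻¹ * R ^ (-(n:ℝ)))
      * ∫ y in closedBall x R, |w y| := by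
  set κ := ∫ z : EuclideanSpace ℝ (Fin n), bA (‖z‖^2) with hκdef
  have hκpos : 0 < κ := kappa_pos hn
  set J := ∫ y, w y * gs n R (Nf x y) with hJdef
  have hIg : ∀ s : ℝ, 0 < s → Integrable (fun y => gs n s (Nf x y)) := by
    intro s hs
    have hc : Continuous (fun y => gs n s (Nf x y)) := gs_cont.comp (Nf_cont x)
    apply integrable_of_zero_outside (x := x) (R := s) hc
    intro y hy
    exact gs_zero hs (Or.inr (Nf_big hs.le hy))
  have hIwg : ∀ s : ℝ, 0 < s → Integrable (fun y => w y * gs n s (Nf x y)) := by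
    intro s hs
    have hc : Continuous (fun y => w y * gs n s (Nf x y)) :=
      hw.continuous.mul (gs_cont.comp (Nf_cont x))
    apply integrable_of_zero_outside (x := x) (R := s) hc
    intro y hy
    rw [gs_zero hs (Or.inr (Nf_big hs.le hy)), mul_zero]
  have claim1 : ∀ ε : ℝ, 0 < ε → ε ≤ R → (∫ y, w y * gs n ε (Nf x y)) = J := by
    intro ε hε hεR
    have hg := green hε hεR x w hw hharm
    have he : (fun y => w y * (gs n ε (Nf x y) - gs n R (Nf x y)))
        = fun y => w y * gs n ε (Nf x y) - w y * gs n R (Nf x y) := by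
      funext y; ring
    rw [he, MeasureTheory.integral_sub (hIwg ε hε) (hIwg R hR)] at hg
    linarith [hg]
  have claim2 : ∀ η : ℝ, 0 < η → |w x * κ - J| ≤ η * κ := by
    intro η hη
    obtain ⟨δ, hδ, hcont⟩ := Metric.continuousAt_iff.1 (hw.continuous.continuousAt (x := x)) η hη
    set ε := min (δ/2) R with hεdef
    have hεpos : 0 < ε := lt_min (by positivity) hR
    have hεR : ε ≤ R := min_le_right _ _
    rw [← claim1 ε hεpos hεR]
    have h0 : w x * κ = ∫ y, w x * gs n ε (Nf x y) := by
      rw [MeasureTheory.integral_const_mul, gs_comp_mass hεpos x]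
    rw [h0, ← MeasureTheory.integral_sub ((hIg ε hεpos).const_mul (w x)) (hIwg ε hεpos)]
    have hb : ∀ y, |w x * gs n ε (Nf x y) - w y * gs n ε (Nf x y)|
        ≤ η * gs n ε (Nf x y) := by
      intro y
      have hfact : w x * gs n ε (Nf x y) - w y * gs n ε (Nf x y)
          = (w x - w y) * gs n ε (Nf x y) := by ring
      rw [hfact, abs_mul, abs_of_nonneg (gs_nonneg hεpos.le)]
      rcases eq_or_ne (gs n ε (Nf x y)) 0 with h | h
      · rw [h, mul_zero, mul_zero]
      · have hyx : ‖y - x‖ < ε := by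
          by_contra hc
          push_neg at hc
          exact h (gs_zero hεpos (Or.inr (by
            have : ε^2 ≤ ‖y - x‖^2 := pow_le_pow_left₀ hεpos.le hc 2
            exact this)))
        have : dist y x < δ := by
          rw [dist_eq_norm]
          calc ‖y - x‖ < ε := hyx
            _ ≤ δ/2 := min_le_left _ _
            _ < δ := by linarith
        have := hcont this
        rw [Real.dist_eq] at this
        apply mul_le_mul_of_nonneg_right _ (gs_nonneg hεpos.le)
        rw [abs_sub_comm]
        exact this.le
    calc |∫ y, (w x * gs n ε (Nf x y) - w y * gs n ε (Nf x y))|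
        ≤ ∫ y, |w x * gs n ε (Nf x y) - w y * gs n ε (Nf x y)| := by
          simpa only [Real.norm_eq_abs] using MeasureTheory.norm_integral_le_integral_norm
            (fun y => w x * gs n ε (Nf x y) - w y * gs n ε (Nf x y))
      _ ≤ ∫ y, η * gs n ε (Nf x y) := by
          apply MeasureTheory.integral_mono _ ((hIg ε hεpos).const_mul η) hb
          exact (((hIg ε hεpos).const_mul (w x)).sub (hIwg ε hεpos)).abs
      _ = η * κ := by rw [MeasureTheory.integral_const_mul, gs_comp_mass hεpos x]
  have hJeq : w x * κ = J := by
    by_contra hne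
    set c := |w x * κ - J| with hcdef
    have hpos : 0 < c := abs_pos.2 (sub_ne_zero.2 hne)
    have h := claim2 (c / (2 * κ)) (by positivity)
    have he : c / (2*κ) * κ = c/2 := by field_simp
    rw [he] at h
    linarith
  have hJb : |J| ≤ R ^ (-(n:ℝ)) * ∫ y in closedBall x R, |w y| := by
    have s1 : |J| ≤ ∫ y, |w y * gs n R (Nf x y)| := by
      simpa only [Real.norm_eq_abs] using MeasureTheory.norm_integral_le_integral_norm
        (fun y => w y * gs n R (Nf x y))
    have s2 : (∫ y, |w y * gs n R (Nf x y)|)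
        = ∫ y in closedBall x R, |w y * gs n R (Nf x y)| := by
      symm
      apply setIntegral_eq_integral_of_forall_compl_eq_zero
      intro y hy
      rw [gs_zero hR (Or.inr (Nf_big hR.le hy)), mul_zero, abs_zero]
    have s3 : (∫ y in closedBall x R, |w y * gs n R (Nf x y)|)
        ≤ ∫ y in closedBall x R, R ^ (-(n:ℝ)) * |w y| := by
      apply setIntegral_mono_on _ _ measurableSet_closedBall
      · intro y _
        rw [abs_mul, abs_of_nonneg (gs_nonneg hR.le), mul_comm]
        apply mul_le_mul_of_nonneg_right _ (abs_nonneg _)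
        calc gs n R (Nf x y) = R ^ (-(n:ℝ)) * bA ((R^2)⁻¹ * Nf x y) := rfl
          _ ≤ R ^ (-(n:ℝ)) * 1 := by
              apply mul_le_mul_of_nonneg_left bA.le_one (Real.rpow_nonneg hR.le _)
          _ = R ^ (-(n:ℝ)) := mul_one _
      · exact ((hIwg R hR).abs).integrableOn
      · exact ((continuous_const.mul hw.continuous.abs).continuousOn).integrableOn_compact
          (isCompact_closedBall x R)
    have s4 : (∫ y in closedBall x R, R ^ (-(n:ℝ)) * |w y|)
        = R ^ (-(n:ℝ)) * ∫ y in closedBall x R, |w y| := MeasureTheory.integral_const_mul _ _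
    linarith
  have hwx : w x = J / κ := by
    rw [eq_div_iff (ne_of_gt hκpos)]
    exact hJeq
  rw [hwx, abs_div, abs_of_pos hκpos, div_le_iff₀ hκpos]
  calc |J| ≤ R ^ (-(n:ℝ)) * ∫ y in closedBall x R, |w y| := hJb
    _ = κ⁻¹ * R ^ (-(n:ℝ)) * (∫ y in closedBall x R, |w y|) * κ := by
        field_simp

end HarmSup

/-- Interior sup–L¹ estimate for harmonic functions: if `K ⊆ U`, `U` has compact
closure contained in the open set `Ω ⊆ ℝⁿ`, then there is a constant `C > 0` such
that every smooth function `u` on `Ω` with `Δu = 0` on `Ω` satisfies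
`sup_{x ∈ K} |u x| ≤ C ∫_U |u|`. -/
theorem harmonic_sup_le_L1 (n : ℕ)
    (Ω : Set (EuclideanSpace ℝ (Fin n))) (hΩ_open : IsOpen Ω) (hΩ_ne : Ω.Nonempty)
    (K : Set (EuclideanSpace ℝ (Fin n))) (hK : IsCompact K) (hKΩ : K ⊆ Ω)
    (U : Set (EuclideanSpace ℝ (Fin n))) (hU_open : IsOpen U)
    (hU_cpt : IsCompact (closure U)) (hKU : K ⊆ U) (hUΩ : closure U ⊆ Ω) :
    ∃ C > 0, ∀ u : EuclideanSpace ℝ (Fin n) → ℝ,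
      ContDiffOn ℝ (⊤ : ℕ∞) u Ω → (∀ x ∈ Ω, laplacian u x = 0) →
      ∀ x ∈ K, |u x| ≤ C * ∫ y in U, |u y| := by
  classical
  rcases Nat.eq_zero_or_pos n with hn0 | hn
  · -- degenerate case `n = 0` : the space is a single point
    subst hn0
    have hsub : Subsingleton (EuclideanSpace ℝ (Fin 0)) :=
      by infer_instance
    refine ⟨1, one_pos, ?_⟩
    intro u hu hΔ x hx
    have hUuniv : U = Set.univ := by
      apply Set.eq_univ_of_forall
      intro y
      rw [Subsingleton.elim y x]
      exact hKU hx
    have hvol : (volume : Measure (EuclideanSpace ℝ (Fin 0))) Set.univ = 1 := by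
      rw [volume_euclideanSpace_eq_dirac]; simp
    have heval : (∫ y in U, |u y|) = |u x| := by
      rw [hUuniv, MeasureTheory.Measure.restrict_univ]
      have : (fun y => |u y|) = fun _ => |u x| :=
        funext (fun y => by rw [Subsingleton.elim y x])
      rw [this, MeasureTheory.integral_const, measureReal_def, hvol]
      simp
    rw [heval, one_mul]
  · -- main case
    obtain ⟨δ, hδpos, hδ⟩ := hK.exists_thickening_subset_open hU_open hKU
    set ρ := δ/2 with hρdef
    have hρpos : 0 < ρ := by positivity
    have hball : ∀ x ∈ K, closedBall x ρ ⊆ U := by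
      intro x hx z hz
      apply hδ
      rw [Metric.mem_thickening_iff]
      exact ⟨x, hx, lt_of_le_of_lt (mem_closedBall.1 hz) (by rw [hρdef]; linarith)⟩
    set κ := ∫ z : EuclideanSpace ℝ (Fin n), HarmSup.bA (‖z‖^2) with hκdef
    have hκpos : 0 < κ := HarmSup.kappa_pos hn
    set R := ρ/8 with hRdef
    have hRpos : 0 < R := by positivity
    refine ⟨κ⁻¹ * R ^ (-(n:ℝ)), by positivity, ?_⟩
    intro u hu hΔ x hx
    have hcbU : closedBall x (3*ρ/4) ⊆ U :=
      subset_trans (closedBall_subset_closedBall (by linarith)) (hball x hx)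
    have hcbΩ : closedBall x (3*ρ/4) ⊆ Ω :=
      subset_trans hcbU (subset_trans subset_closure hUΩ)
    set η : ContDiffBump x := ⟨ρ/2, 3*ρ/4, by positivity, by linarith⟩ with hηdef
    set w : EuclideanSpace ℝ (Fin n) → ℝ := fun y => if y ∈ Ω then η y * u y else 0 with hwdef
    have hsmooth : ContDiff ℝ ((⊤ : ℕ∞) : WithTop ℕ∞) w := by
      rw [contDiff_iff_contDiffAt]
      intro y
      by_cases hy : y ∈ Ω
      · have hη : ContDiffAt ℝ ((⊤ : ℕ∞) : WithTop ℕ∞) (fun z => η z) y :=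
          η.contDiff.contDiffAt
        have hu' : ContDiffAt ℝ ((⊤ : ℕ∞) : WithTop ℕ∞) u y :=
          ((hu y hy).contDiffAt (hΩ_open.mem_nhds hy)).of_le (by simp)
        have h1 : ContDiffAt ℝ ((⊤ : ℕ∞) : WithTop ℕ∞) (fun z => η z * u z) y :=
          hη.mul hu'
        apply h1.congr_of_eventuallyEq
        apply Filter.eventually_of_mem (hΩ_open.mem_nhds hy)
        intro z hz
        show w z = η z * u z
        simp only [hwdef]
        rw [if_pos hz]
      · have hyc : y ∈ (closedBall x (3*ρ/4))ᶜ := fun hc => hy (hcbΩ hc)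
        apply (contDiffAt_const (n := ((⊤ : ℕ∞) : WithTop ℕ∞)) (c := (0:ℝ))).congr_of_eventuallyEq
        apply Filter.eventually_of_mem ((Metric.isClosed_closedBall (x := x) (ε := 3*ρ/4)).isOpen_compl.mem_nhds hyc)
        intro z hz
        by_cases hzΩ : z ∈ Ω
        · have hzb : z ∉ ball x (3*ρ/4) := fun hb => hz (ball_subset_closedBall hb)
          have hη0 : η z = 0 := by
            rw [← Function.notMem_support, η.support_eq]
            exact hzb
          simp [hwdef, hzΩ, hη0]
        · simp [hwdef, hzΩ]
    have hEq : ∀ z ∈ ball x (ρ/2), w z = u z := by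
      intro z hz
      have hz2 : z ∈ closedBall x (3*ρ/4) :=
        closedBall_subset_closedBall (by linarith) (ball_subset_closedBall hz)
      have hzΩ : z ∈ Ω := hcbΩ hz2
      have hη1 : η z = 1 := η.one_of_mem_closedBall (ball_subset_closedBall hz)
      simp [hwdef, hzΩ, hη1]
    have hharm : ∀ y ∈ ball x (2*R), laplacian w y = 0 := by
      intro y hy
      have hy2 : y ∈ ball x (ρ/2) := by
        rw [mem_ball] at hy ⊢
        rw [hRdef] at hy
        linarith
      have hmem : ball x (ρ/2) ∈ nhds y := isOpen_ball.mem_nhds hy2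
      have hfe : ∀ i : Fin n,
          (fun z => fderiv ℝ w z (EuclideanSpace.single i (1:ℝ)))
          =ᶠ[nhds y] (fun z => fderiv ℝ u z (EuclideanSpace.single i (1:ℝ))) := by
        intro i
        apply Filter.eventually_of_mem hmem
        intro z hz
        have hwu : w =ᶠ[nhds z] u :=
          Filter.eventually_of_mem (isOpen_ball.mem_nhds hz) hEq
        show fderiv ℝ w z (EuclideanSpace.single i (1:ℝ))
          = fderiv ℝ u z (EuclideanSpace.single i (1:ℝ))
        rw [hwu.fderiv_eq]
      have hlap : laplacian w y = laplacian u y := by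
        unfold laplacian
        apply Finset.sum_congr rfl
        intro i _
        rw [(hfe i).fderiv_eq]
      rw [hlap]
      have hyΩ : y ∈ Ω := hcbΩ (closedBall_subset_closedBall (by linarith)
        (ball_subset_closedBall hy2))
      exact hΔ y hyΩ
    have hkey := HarmSup.key_estimate hn x (R := R) hRpos w hsmooth hharm
    have hwx : w x = u x := hEq x (mem_ball_self (by positivity))
    have hIcb : (∫ y in closedBall x R, |w y|) = ∫ y in closedBall x R, |u y| := by
      apply setIntegral_congr_fun measurableSet_closedBall
      intro z hz
      have : z ∈ ball x (ρ/2) := by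
        rw [mem_closedBall] at hz
        rw [mem_ball]
        rw [hRdef] at hz
        linarith
      show |w z| = |u z|
      rw [hEq z this]
    have hint : IntegrableOn (fun y => |u y|) U := by
      have hcont : ContinuousOn u (closure U) := hu.continuousOn.mono hUΩ
      exact (hcont.abs.integrableOn_compact hU_cpt).mono_set subset_closure
    have hIU : (∫ y in closedBall x R, |u y|) ≤ ∫ y in U, |u y| := by
      apply setIntegral_mono_set hint
        (MeasureTheory.ae_of_all _ (fun y => abs_nonneg (u y)))
      apply HasSubset.Subset.eventuallyLE
      exact subset_trans (closedBall_subset_closedBall (by linarith)) (hball x hx)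
    calc |u x| = |w x| := by rw [hwx]
      _ ≤ κ⁻¹ * R ^ (-(n:ℝ)) * ∫ y in closedBall x R, |w y| := hkey
      _ = κ⁻¹ * R ^ (-(n:ℝ)) * ∫ y in closedBall x R, |u y| := by rw [hIcb]
      _ ≤ κ⁻¹ * R ^ (-(n:ℝ)) * ∫ y in U, |u y| :=
          mul_le_mul_of_nonneg_left hIU (by positivity)
end

section
/- Let n ≥ 1 and let 0 < λ ≤ Λ < ∞. Let A be a (real) linear map on ℝⁿ that is normal, i.e. A commutes with its adjoint A* (equivalently A*A = AA*), and satisfies the ellipticity bounds λ‖v‖² ≤ ⟨A v, v⟩ for all v ∈ ℝⁿ, and ‖A‖ ≤ Λ in operator norm. Then the map I + A is invertible, and there exists a constant M = M(λ, Λ) < 1, depending only on λ and Λ, such that the Cayley transform 𝓜 = (I − A) ∘ (I + A)⁻¹ satisfies ‖𝓜‖ ≤ M in operator norm. -/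
/-!
Polarization gives `‖x - A x‖² = ‖x + A x‖² - 4 ⟪A x, x⟫`, while `‖x + A x‖ ≤ (1 + Λ) ‖x‖` and
ellipticity give `4 ⟪A x, x⟫ ≥ 4λ / (1 + Λ)² · ‖x + A x‖²`. Hence
`‖(I - A) x‖ ≤ M ‖(I + A) x‖` with `M = √(1 - 4λ / (1 + Λ)²) < 1`. This inequality makes `I + A`
injective, hence invertible in finite dimension, and evaluating it at `x = (I + A)⁻¹ u` bounds the
Cayley transform.
-/

open scoped RealInnerProductSpace

section InnerProduct

variable {E : Type*} [NormedAddCommGroup E] [InnerProductSpace ℝ E]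

theorem norm_sub_sq_le_of_mul_norm_sq_le_inner {lam Lam : ℝ} {v w : E} (hlam : 0 ≤ lam)
    (hcoer : lam * ‖v‖ ^ 2 ≤ ⟪w, v⟫) (hw : ‖w‖ ≤ Lam * ‖v‖) :
    ‖v - w‖ ^ 2 ≤ (1 - 4 * lam / (1 + Lam) ^ 2) * ‖v + w‖ ^ 2 := by
  have hpolarization : ‖v - w‖ ^ 2 = ‖v + w‖ ^ 2 - 4 * ⟪w, v⟫ := by
    rw [norm_sub_sq_real, norm_add_sq_real, real_inner_comm]; ring
  have hadd_sq : ‖v + w‖ ^ 2 ≤ (1 + Lam) ^ 2 * ‖v‖ ^ 2 := by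
    rw [← mul_pow]
    exact pow_le_pow_left₀ (norm_nonneg _) (by linarith [norm_add_le v w]) 2
  have hdiv : 4 * lam / (1 + Lam) ^ 2 * ‖v + w‖ ^ 2 ≤ 4 * lam * ‖v‖ ^ 2 := by
    rcases (sq_nonneg (1 + Lam)).eq_or_lt with h | h
    · rw [← h, div_zero, zero_mul]; positivity
    · rw [div_mul_eq_mul_div, div_le_iff₀ h]; nlinarith
  nlinarith

noncomputable def cayleyBound (lam Lam : ℝ) : ℝ := √(1 - 4 * lam / (1 + Lam) ^ 2)

theorem cayleyBound_lt_one {lam Lam : ℝ} (hlam : 0 < lam) (hlamLam : lam ≤ Lam) :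
    cayleyBound lam Lam < 1 := by
  rw [cayleyBound, Real.sqrt_lt' one_pos]
  have : 0 < 4 * lam / (1 + Lam) ^ 2 := by
    have : 0 < 1 + Lam := by linarith
    positivity
  linarith

theorem norm_one_sub_apply_le_cayleyBound_mul {lam Lam : ℝ} (A : E →L[ℝ] E) (hlam : 0 ≤ lam)
    (hcoer : ∀ v, lam * ‖v‖ ^ 2 ≤ ⟪A v, v⟫) (hA : ‖A‖ ≤ Lam) (x : E) :
    ‖(1 - A) x‖ ≤ cayleyBound lam Lam * ‖(1 + A) x‖ := by
  have hAx : ‖A x‖ ≤ Lam * ‖x‖ := (A.le_opNorm x).trans (by gcongr)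
  have hsq := norm_sub_sq_le_of_mul_norm_sq_le_inner hlam (hcoer x) hAx
  rw [cayleyBound, ← Real.sqrt_sq (norm_nonneg ((1 + A) x)), ← Real.sqrt_mul' _ (sq_nonneg _),
    ← Real.sqrt_sq (norm_nonneg ((1 - A) x))]
  exact Real.sqrt_le_sqrt (by simpa using hsq)

end InnerProduct

section Normed

variable {𝕜 E : Type*} [NontriviallyNormedField 𝕜] [NormedAddCommGroup E] [NormedSpace 𝕜 E]

theorem ContinuousLinearMap.isUnit_one_add_of_norm_one_sub_apply_le [FiniteDimensional 𝕜 E]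
    [CompleteSpace 𝕜] [CharZero 𝕜] {A : E →L[𝕜] E} {M : ℝ}
    (h : ∀ x, ‖(1 - A) x‖ ≤ M * ‖(1 + A) x‖) : IsUnit (1 + A) := by
  have := FiniteDimensional.complete 𝕜 E
  rw [isUnit_iff_isUnit_toLinearMap, LinearMap.isUnit_iff_ker_eq_bot, LinearMap.ker_eq_bot']
  intro x hx
  replace hx : (1 + A) x = 0 := hx
  have hx' : (1 - A) x = 0 := norm_le_zero_iff.mp (by simpa [hx] using h x)
  have h2x : (2 : 𝕜) • x = (1 + A) x + (1 - A) x := by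
    rw [add_apply, sub_apply, two_smul]; abel
  simpa [hx, hx'] using h2x

theorem ContinuousLinearMap.norm_mul_ring_inverse_le {S T : E →L[𝕜] E} {M : ℝ} (hS : IsUnit S)
    (hM : 0 ≤ M) (h : ∀ x, ‖T x‖ ≤ M * ‖S x‖) : ‖T * Ring.inverse S‖ ≤ M := by
  refine opNorm_le_bound _ hM fun u => ?_
  have hSu : S (Ring.inverse S u) = u := by
    simpa using congr($(Ring.mul_inverse_cancel S hS) u)
  simpa [hSu] using h (Ring.inverse S u)

end Normed

theorem cayley_transform_norm_lt_one_general (n : ℕ)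
    (lam Lam : ℝ) (hlam : 0 < lam) (hlamLam : lam ≤ Lam) :
    ∃ M : ℝ, M < 1 ∧
      ∀ A : EuclideanSpace ℝ (Fin n) →L[ℝ] EuclideanSpace ℝ (Fin n),
        (ContinuousLinearMap.adjoint A) * A = A * (ContinuousLinearMap.adjoint A) →
        (∀ v : EuclideanSpace ℝ (Fin n), lam * ‖v‖ ^ 2 ≤ ⟪A v, v⟫) →
        ‖A‖ ≤ Lam →
        IsUnit (1 + A) ∧ ‖(1 - A) * Ring.inverse (1 + A)‖ ≤ M := by
  refine ⟨cayleyBound lam Lam, cayleyBound_lt_one hlam hlamLam, fun A _ hcoer hA => ?_⟩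
  have hcayley := norm_one_sub_apply_le_cayleyBound_mul A hlam.le hcoer hA
  have hunit := ContinuousLinearMap.isUnit_one_add_of_norm_one_sub_apply_le hcayley
  exact ⟨hunit, ContinuousLinearMap.norm_mul_ring_inverse_le hunit (Real.sqrt_nonneg _) hcayley⟩

/-- **Cayley transform estimate** (Lemma A.3 of [D]): if `A` is a normal linear map
on `ℝⁿ` satisfying the ellipticity bounds `λ‖v‖² ≤ ⟨Av, v⟩` and `‖A‖ ≤ Λ`, then
`I + A` is invertible and the Cayley transform `𝓜 = (I − A)(I + A)⁻¹` satisfies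
`‖𝓜‖ ≤ M` for some constant `M = M(λ, Λ) < 1` depending only on `λ` and `Λ`. -/
theorem cayley_transform_norm_lt_one (n : ℕ) (hn : 1 ≤ n)
    (lam Lam : ℝ) (hlam : 0 < lam) (hlamLam : lam ≤ Lam) :
    ∃ M : ℝ, M < 1 ∧
      ∀ A : EuclideanSpace ℝ (Fin n) →L[ℝ] EuclideanSpace ℝ (Fin n),
        (ContinuousLinearMap.adjoint A) * A = A * (ContinuousLinearMap.adjoint A) →
        (∀ v : EuclideanSpace ℝ (Fin n), lam * ‖v‖ ^ 2 ≤ ⟪A v, v⟫) →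
        ‖A‖ ≤ Lam →
        IsUnit (1 + A) ∧ ‖(1 - A) * Ring.inverse (1 + A)‖ ≤ M :=
  cayley_transform_norm_lt_one_general n lam Lam hlam hlamLam
end
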